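/- arXiv:2309.10793 — 2 statements merged into one kernel-verified Lean document; each statement's English description precedes it below -/
import Mathlib

section
/- Let V be a finite-dimensional complex vector space. Then GO(S)° acts freely on the set of linear maps f : V → S whose pullback form f*ω_S has rank at least r − 1; that is, if f : V → S is a linear map with rank(f*ω_S) ≥ r − 1 and φ ∈ GO(S)° satisfies φ ∘ f = f, then φ is the identity. -/
open Matrix

noncomputable section

variable {r : ℕ}

/-- The orthogonal similitude group `GO(ω)` as a subgroup of `GL(r, ℂ)`:
invertible matrices `φ` with `φᵀ * ω * φ = c • ω` for some unit scalar `c`. -/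
def GOmat (r : ℕ) (ω : Matrix (Fin r) (Fin r) ℂ) : Subgroup (GL (Fin r) ℂ) where
  carrier := {φ | ∃ c : ℂˣ,
    (φ : Matrix (Fin r) (Fin r) ℂ)ᵀ * ω * (φ : Matrix (Fin r) (Fin r) ℂ) = (c : ℂ) • ω}
  one_mem' := ⟨1, by simp⟩
  mul_mem' := by
    rintro φ ψ ⟨c, hc⟩ ⟨d, hd⟩
    refine ⟨c * d, ?_⟩
    have h : ((φ * ψ : GL (Fin r) ℂ) : Matrix (Fin r) (Fin r) ℂ)
        = (φ : Matrix (Fin r) (Fin r) ℂ) * (ψ : Matrix (Fin r) (Fin r) ℂ) := rfl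
    calc ((φ * ψ : GL (Fin r) ℂ) : Matrix (Fin r) (Fin r) ℂ)ᵀ * ω * (φ * ψ : GL (Fin r) ℂ)
        = (ψ : Matrix (Fin r) (Fin r) ℂ)ᵀ *
            (((φ : Matrix (Fin r) (Fin r) ℂ)ᵀ * ω * (φ : Matrix (Fin r) (Fin r) ℂ)) *
              (ψ : Matrix (Fin r) (Fin r) ℂ)) := by
          rw [h, transpose_mul]; noncomm_ring
      _ = ((c : ℂ) * (d : ℂ)) • ω := by
          rw [hc, Matrix.smul_mul, Matrix.mul_smul, ← Matrix.mul_assoc, hd, smul_smul]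
      _ = ((c * d : ℂˣ) : ℂ) • ω := by rw [Units.val_mul]
  inv_mem' := by
    rintro φ ⟨c, hc⟩
    refine ⟨c⁻¹, ?_⟩
    have h1 : ((φ⁻¹ : GL (Fin r) ℂ) : Matrix (Fin r) (Fin r) ℂ) *
        (φ : Matrix (Fin r) (Fin r) ℂ) = 1 := φ.inv_mul
    have h2 : (φ : Matrix (Fin r) (Fin r) ℂ) *
        ((φ⁻¹ : GL (Fin r) ℂ) : Matrix (Fin r) (Fin r) ℂ) = 1 := φ.mul_inv
    have key : ω = (c : ℂ) • (((φ⁻¹ : GL (Fin r) ℂ) : Matrix (Fin r) (Fin r) ℂ)ᵀ * ω *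
        ((φ⁻¹ : GL (Fin r) ℂ) : Matrix (Fin r) (Fin r) ℂ)) := by
      calc ω = (((φ : Matrix (Fin r) (Fin r) ℂ) *
              ((φ⁻¹ : GL (Fin r) ℂ) : Matrix (Fin r) (Fin r) ℂ))ᵀ) * ω *
              ((φ : Matrix (Fin r) (Fin r) ℂ) *
              ((φ⁻¹ : GL (Fin r) ℂ) : Matrix (Fin r) (Fin r) ℂ)) := by
            rw [h2]; simp
        _ = ((φ⁻¹ : GL (Fin r) ℂ) : Matrix (Fin r) (Fin r) ℂ)ᵀ *
              (((φ : Matrix (Fin r) (Fin r) ℂ)ᵀ * ω * (φ : Matrix (Fin r) (Fin r) ℂ)) *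
              ((φ⁻¹ : GL (Fin r) ℂ) : Matrix (Fin r) (Fin r) ℂ)) := by
            rw [transpose_mul]; noncomm_ring
        _ = (c : ℂ) • (((φ⁻¹ : GL (Fin r) ℂ) : Matrix (Fin r) (Fin r) ℂ)ᵀ * ω *
              ((φ⁻¹ : GL (Fin r) ℂ) : Matrix (Fin r) (Fin r) ℂ)) := by
            rw [hc, Matrix.smul_mul, Matrix.mul_smul]; noncomm_ring
    calc ((φ⁻¹ : GL (Fin r) ℂ) : Matrix (Fin r) (Fin r) ℂ)ᵀ * ω * (φ⁻¹ : GL (Fin r) ℂ)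
        = ((c⁻¹ : ℂˣ) : ℂ) • ((c : ℂ) • (((φ⁻¹ : GL (Fin r) ℂ) : Matrix (Fin r) (Fin r) ℂ)ᵀ *
            ω * ((φ⁻¹ : GL (Fin r) ℂ) : Matrix (Fin r) (Fin r) ℂ))) := by
          rw [smul_smul]; norm_num
      _ = ((c⁻¹ : ℂˣ) : ℂ) • ω := by rw [← key]

/-- The orthogonal group `O(ω)` as a subgroup of `GL(r, ℂ)`. -/
def Omat (r : ℕ) (ω : Matrix (Fin r) (Fin r) ℂ) : Subgroup (GL (Fin r) ℂ) where
  carrier := {φ | (φ : Matrix (Fin r) (Fin r) ℂ)ᵀ * ω * (φ : Matrix (Fin r) (Fin r) ℂ) = ω}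
  one_mem' := by simp
  mul_mem' := by
    intro φ ψ hφ hψ
    have h : ((φ * ψ : GL (Fin r) ℂ) : Matrix (Fin r) (Fin r) ℂ)
        = (φ : Matrix (Fin r) (Fin r) ℂ) * (ψ : Matrix (Fin r) (Fin r) ℂ) := rfl
    show ((φ * ψ : GL (Fin r) ℂ) : Matrix (Fin r) (Fin r) ℂ)ᵀ * ω * (φ * ψ : GL (Fin r) ℂ) = ω
    calc ((φ * ψ : GL (Fin r) ℂ) : Matrix (Fin r) (Fin r) ℂ)ᵀ * ω * (φ * ψ : GL (Fin r) ℂ)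
        = (ψ : Matrix (Fin r) (Fin r) ℂ)ᵀ *
            (((φ : Matrix (Fin r) (Fin r) ℂ)ᵀ * ω * (φ : Matrix (Fin r) (Fin r) ℂ)) *
              (ψ : Matrix (Fin r) (Fin r) ℂ)) := by
          rw [h, transpose_mul]; noncomm_ring
      _ = ω := by
          rw [hφ, ← Matrix.mul_assoc]
          exact hψ
  inv_mem' := by
    intro φ hφ
    have h2 : (φ : Matrix (Fin r) (Fin r) ℂ) *
        ((φ⁻¹ : GL (Fin r) ℂ) : Matrix (Fin r) (Fin r) ℂ) = 1 := φ.mul_inv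
    show ((φ⁻¹ : GL (Fin r) ℂ) : Matrix (Fin r) (Fin r) ℂ)ᵀ * ω * (φ⁻¹ : GL (Fin r) ℂ) = ω
    calc ((φ⁻¹ : GL (Fin r) ℂ) : Matrix (Fin r) (Fin r) ℂ)ᵀ * ω * (φ⁻¹ : GL (Fin r) ℂ)
        = ((φ⁻¹ : GL (Fin r) ℂ) : Matrix (Fin r) (Fin r) ℂ)ᵀ *
            (((φ : Matrix (Fin r) (Fin r) ℂ)ᵀ * ω * (φ : Matrix (Fin r) (Fin r) ℂ)) *
            ((φ⁻¹ : GL (Fin r) ℂ) : Matrix (Fin r) (Fin r) ℂ)) := by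
          rw [hφ, Matrix.mul_assoc]
      _ = (((φ : Matrix (Fin r) (Fin r) ℂ) *
            ((φ⁻¹ : GL (Fin r) ℂ) : Matrix (Fin r) (Fin r) ℂ))ᵀ) * ω *
            ((φ : Matrix (Fin r) (Fin r) ℂ) *
            ((φ⁻¹ : GL (Fin r) ℂ) : Matrix (Fin r) (Fin r) ℂ)) := by
          rw [transpose_mul]; noncomm_ring
      _ = ω := by rw [h2]; simp

/-- The identity component `GO(ω)°`, as a subgroup of `GL(r, ℂ)`: the image in
`GL(r, ℂ)` of the connected component of the identity of `GO(ω)` (with its subspace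
topology). -/
def GOmatConn (r : ℕ) (ω : Matrix (Fin r) (Fin r) ℂ) : Subgroup (GL (Fin r) ℂ) :=
  (Subgroup.connectedComponentOfOne (GOmat r ω)).map (GOmat r ω).subtype

/-! Since `φ` fixes the range of `f` and `f*ω ≠ 0`, its multiplier `χ(φ)` is `1`, so `φ` is
orthogonal. On `GO(ω)` the function `det φ / χ(φ) ^ (r / 2)` is continuous with values in `{±1}`,
hence it is `1` on the identity component, and `det φ = 1`. Finally, `φ` fixes a subspace of
codimension at most one, so `φ = 1 + u wᵀ`; then `det φ = 1 + w ⬝ u` forces `w ⬝ u = 0`, and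
orthogonality forces `ω u = 0`, i.e. `u = 0`. -/

lemma LinearMap.finrank_range_compl₁₂_le {K V W P : Type*} [Field K] [AddCommGroup V]
    [Module K V] [AddCommGroup W] [Module K W] [FiniteDimensional K W] [AddCommGroup P]
    [Module K P] (B : W →ₗ[K] W →ₗ[K] P) (f g : V →ₗ[K] W) :
    Module.finrank K (range (B.compl₁₂ f g)) ≤ Module.finrank K (range f) := by
  rw [show B.compl₁₂ f g = (B.compl₂ g).comp f from rfl, range_comp]
  exact Submodule.finrank_map_le _ _

namespace Matrix

variable {R K m n : Type*} [Fintype n]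

lemma mulVec_dotProduct_mulVec_mulVec [CommSemiring R] (A ω : Matrix n n R) (x y : n → R) :
    (A *ᵥ x) ⬝ᵥ (ω *ᵥ (A *ᵥ y)) = x ⬝ᵥ ((Aᵀ * ω * A) *ᵥ y) := by
  rw [← mulVec_mulVec, ← mulVec_mulVec, dotProduct_mulVec x Aᵀ, vecMul_transpose]

variable [Field K]

lemma exists_continuous_multiplier [TopologicalSpace K] [IsTopologicalRing K]
    {ω : Matrix n n K} (hω : ω ≠ 0) :
    ∃ μ : Matrix n n K → K, Continuous μ ∧
      ∀ {A : Matrix n n K} {c : K}, Aᵀ * ω * A = c • ω → μ A = c := by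
  obtain ⟨i, j, hij⟩ : ∃ i j, ω i j ≠ 0 := by simpa [← ext_iff] using hω
  refine ⟨fun A ↦ (Aᵀ * ω * A) i j / ω i j, by fun_prop, fun hA ↦ by simp [hA, hij]⟩

variable [DecidableEq n]

lemma det_sq_eq_pow_card_of_transpose_mul_mul_eq_smul {ω A : Matrix n n K} {c : K}
    (hω : ω.det ≠ 0) (hA : Aᵀ * ω * A = c • ω) : A.det ^ 2 = c ^ Fintype.card n := by
  have h := congrArg det hA
  rw [det_mul, det_mul, det_transpose, det_smul] at h
  exact mul_right_cancel₀ hω (by linear_combination h)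

lemma exists_eq_vecMulVec_of_rank_le_one {M : Matrix m n K} (hM : M.rank ≤ 1) :
    ∃ (u : m → K) (w : n → K), M = vecMulVec u w := by
  obtain ⟨u, hu⟩ := finrank_le_one_iff.mp hM
  choose w hw using fun j ↦ hu ⟨M *ᵥ Pi.single j 1, Pi.single j 1, rfl⟩
  refine ⟨u.1, w, ext fun i j ↦ ?_⟩
  simpa [vecMulVec_apply, mul_comm] using (congrFun (congrArg Subtype.val (hw j)) i).symm

lemma rank_sub_one_le_one_of_fixes {A : Matrix n n K} {W : Submodule K (n → K)}
    (hW : ∀ x ∈ W, A *ᵥ x = x) (hdim : Fintype.card n - 1 ≤ Module.finrank K W) :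
    (A - 1).rank ≤ 1 := by
  have hker : W ≤ LinearMap.ker (A - 1).mulVecLin := fun x hx ↦ by
    simp [hW x hx]
  have := LinearMap.finrank_range_add_finrank_ker (A - 1).mulVecLin
  rw [Module.finrank_fintype_fun_eq_card] at this
  have := Submodule.finrank_mono hker
  unfold rank
  omega

lemma det_one_add_vecMulVec (u w : n → K) : (1 + vecMulVec u w).det = 1 + w ⬝ᵥ u := by
  rw [vecMulVec_eq (Fin 1), det_one_add_replicateCol_mul_replicateRow]

lemma vecMulVec_eq_zero_of_isOrthogonal_of_det_eq_one [NeZero (2 : K)] {ω : Matrix n n K}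
    (hsymm : ω.IsSymm) (hω : IsUnit ω.det) {u w : n → K}
    (horth : (1 + vecMulVec u w)ᵀ * ω * (1 + vecMulVec u w) = ω)
    (hdet : (1 + vecMulVec u w).det = 1) : vecMulVec u w = 0 := by
  have hwu : w ⬝ᵥ u = 0 := by
    simpa [det_one_add_vecMulVec] using hdet
  have hua : u ᵥ* ω = ω *ᵥ u := by rw [← vecMul_transpose, hsymm.eq]
  set a := ω *ᵥ u
  set s := a ⬝ᵥ u
  have hquad : vecMulVec w a + vecMulVec a w + s • vecMulVec w w = 0 := by
    simp only [transpose_add, transpose_one, transpose_vecMulVec, add_mul, mul_add, one_mul,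
      mul_one, vecMulVec_mul, mul_vecMulVec, hua, vecMulVec_mulVec, op_smul_eq_smul,
      smul_vecMulVec] at horth
    rwa [add_assoc, add_eq_left, ← add_assoc] at horth
  rcases eq_or_ne w 0 with rfl | hw
  · exact vecMulVec_zero u
  obtain ⟨j, hj⟩ : ∃ j, w j ≠ 0 := by simpa [funext_iff] using hw
  have hs : s = 0 := by
    have hsw := congrArg (· *ᵥ u) hquad
    simp only [add_mulVec, vecMulVec_mulVec, smul_mulVec, hwu, op_smul_eq_smul, zero_smul,
      smul_zero, add_zero, zero_mulVec] at hsw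
    exact (smul_eq_zero.mp hsw).resolve_right hw
  have ha : a = 0 := funext fun k ↦ by
    have hjk := congrFun₂ hquad j k
    have hjj := congrFun₂ hquad j j
    simp only [hs, zero_smul, add_zero, add_apply, vecMulVec_apply, zero_apply] at hjk hjj
    have haj : a j = 0 := by
      have h2 : (2 * w j) * a j = 0 := by linear_combination hjj
      exact (mul_eq_zero.mp h2).resolve_left (mul_ne_zero two_ne_zero hj)
    simpa [haj, hj] using hjk
  rw [eq_zero_of_mulVec_eq_zero hω.ne_zero ha, zero_vecMulVec]

lemma eq_one_of_isOrthogonal_of_det_eq_one_of_fixes [NeZero (2 : K)] {ω A : Matrix n n K}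
    (hsymm : ω.IsSymm) (hω : IsUnit ω.det) (horth : Aᵀ * ω * A = ω) (hdet : A.det = 1)
    {W : Submodule K (n → K)} (hW : ∀ x ∈ W, A *ᵥ x = x)
    (hdim : Fintype.card n - 1 ≤ Module.finrank K W) : A = 1 := by
  obtain ⟨u, w, huw⟩ := exists_eq_vecMulVec_of_rank_le_one (rank_sub_one_le_one_of_fixes hW hdim)
  obtain rfl : A = 1 + vecMulVec u w := by rw [← huw]; abel
  rw [vecMulVec_eq_zero_of_isOrthogonal_of_det_eq_one hsymm hω horth hdet, add_zero]

end Matrix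

section OrthogonalSimilitudes

variable {ω : Matrix (Fin r) (Fin r) ℂ}

lemma mem_Omat_iff {φ : GL (Fin r) ℂ} :
    φ ∈ Omat r ω ↔ (φ : Matrix (Fin r) (Fin r) ℂ)ᵀ * ω * φ = ω :=
  Iff.rfl

lemma mem_Omat_of_mem_GOmat_of_fixes {φ : GL (Fin r) ℂ} (hφ : φ ∈ GOmat r ω)
    {x y : Fin r → ℂ} (hx : (φ : Matrix (Fin r) (Fin r) ℂ) *ᵥ x = x)
    (hy : (φ : Matrix (Fin r) (Fin r) ℂ) *ᵥ y = y) (hxy : x ⬝ᵥ (ω *ᵥ y) ≠ 0) :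
    φ ∈ Omat r ω := by
  obtain ⟨c, hc⟩ := hφ
  have h := mulVec_dotProduct_mulVec_mulVec (φ : Matrix (Fin r) (Fin r) ℂ) ω x y
  rw [hx, hy, hc, smul_mulVec, dotProduct_smul, smul_eq_mul] at h
  rw [mem_Omat_iff, hc, (mul_eq_right₀ hxy).mp h.symm, one_smul]

lemma det_eq_pow_of_mem_GOmatConn (hr : Even r) (hω : IsUnit ω.det) {φ : GL (Fin r) ℂ}
    (hφ : φ ∈ GOmatConn r ω) {c : ℂˣ}
    (hc : (φ : Matrix (Fin r) (Fin r) ℂ)ᵀ * ω * φ = (c : ℂ) • ω) :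
    (φ : Matrix (Fin r) (Fin r) ℂ).det = (c : ℂ) ^ (r / 2) := by
  rcases r.eq_zero_or_pos with rfl | hr0
  · simp
  have hω0 : ω ≠ 0 := by
    have : Nonempty (Fin r) := ⟨⟨0, hr0⟩⟩
    rintro rfl
    simp at hω
  obtain ⟨μ, hμ, hμc⟩ := exists_continuous_multiplier hω0
  let toMat : GOmat r ω → Matrix (Fin r) (Fin r) ℂ := fun x ↦ ((x : GL (Fin r) ℂ) : _)
  have hmat : Continuous toMat := Units.continuous_val.comp continuous_subtype_val
  let ν : GOmat r ω → ℂ := fun x ↦ (toMat x).det / μ (toMat x) ^ (r / 2)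
  have hν : ∀ x, ν x ∈ ({1, -1} : Set ℂ) := by
    rintro ⟨x, d, hd⟩
    refine sq_eq_one_iff.mp ?_
    simp only [ν, toMat, hμc hd, div_pow, ← pow_mul, Nat.div_two_mul_two_of_even hr]
    rw [det_sq_eq_pow_card_of_transpose_mul_mul_eq_smul hω.ne_zero hd, Fintype.card_fin,
      div_self (pow_ne_zero _ d.ne_zero)]
  have hν_cont : Continuous ν := by
    refine hmat.matrix_det.div ((hμ.comp hmat).pow _) fun ⟨x, d, hd⟩ ↦ ?_
    simp only [toMat, hμc hd]
    exact pow_ne_zero _ d.ne_zero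
  have hν_one : ν 1 = 1 := by
    have hμ1 : μ 1 = 1 := hμc (by simp)
    simp [ν, toMat, hμ1]
  obtain ⟨ψ, hψ, rfl⟩ := Subgroup.mem_map.mp hφ
  have hνψ : ν ψ = 1 := hν_one ▸ isPreconnected_connectedComponent.constant_of_mapsTo
    DiscreteTopology.isDiscrete hν_cont.continuousOn (fun x _ ↦ hν x) hψ mem_connectedComponent
  have hμψ : μ (toMat ψ) = c := hμc hc
  rwa [div_eq_one_iff_eq (hμψ ▸ pow_ne_zero _ c.ne_zero), hμψ] at hνψ

end OrthogonalSimilitudes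

theorem GOconn_acts_freely_on_corank_le_one_locus_general
    (r : ℕ) (hr : Even r) (hr2 : 2 ≤ r)
    (ω : Matrix (Fin r) (Fin r) ℂ) (hsymm : ω.IsSymm) (hnd : IsUnit ω.det)
    (V : Type) [AddCommGroup V] [Module ℂ V]
    (f : V →ₗ[ℂ] (Fin r → ℂ))
    (hrank : r - 1 ≤ Module.finrank ℂ
      (LinearMap.range ((Matrix.toLinearMap₂' ℂ ω).compl₁₂ f f)))
    (φ : GL (Fin r) ℂ) (hφ : φ ∈ GOmatConn r ω)
    (hfix : ∀ v : V, (φ : Matrix (Fin r) (Fin r) ℂ) *ᵥ (f v) = f v) :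
    φ = 1 := by
  have hpullback : (Matrix.toLinearMap₂' ℂ ω).compl₁₂ f f ≠ 0 := by
    intro h
    rw [h, LinearMap.range_zero, finrank_bot] at hrank
    omega
  obtain ⟨v, v', hvv'⟩ : ∃ v v', f v ⬝ᵥ (ω *ᵥ f v') ≠ 0 := by
    simpa [DFunLike.ne_iff, Matrix.toLinearMap₂'_apply'] using hpullback
  have hO := mem_Omat_iff.mp <|
    mem_Omat_of_mem_GOmat_of_fixes (Subgroup.map_subtype_le _ hφ) (hfix v) (hfix v') hvv'
  have hdet : (φ : Matrix (Fin r) (Fin r) ℂ).det = 1 := by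
    simpa using det_eq_pow_of_mem_GOmatConn (c := 1) hr hnd hφ (by simpa using hO)
  refine Units.ext (eq_one_of_isOrthogonal_of_det_eq_one_of_fixes hsymm hnd hO hdet
    (W := LinearMap.range f) (by rintro _ ⟨v, rfl⟩; exact hfix v) ?_)
  simpa using hrank.trans (LinearMap.finrank_range_compl₁₂_le _ f f)

/-- Let `ω` be a nondegenerate symmetric `r × r` matrix (`r` even,
`r ≥ 2`), viewed as a bilinear form on `S = ℂʳ`, and let `V` be a finite-dimensional
complex vector space.  Then `GO(ω)°` acts freely on the set of linear maps `f : V → S`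
whose pullback form `f*ω` has rank at least `r - 1`: if `φ ∈ GO(ω)°` satisfies
`φ ∘ f = f` for such an `f`, then `φ = 1`. -/
theorem GOconn_acts_freely_on_corank_le_one_locus
    (r : ℕ) (hr : Even r) (hr2 : 2 ≤ r)
    (ω : Matrix (Fin r) (Fin r) ℂ) (hsymm : ω.IsSymm) (hnd : IsUnit ω.det)
    (V : Type) [AddCommGroup V] [Module ℂ V] [FiniteDimensional ℂ V]
    (f : V →ₗ[ℂ] (Fin r → ℂ))
    (hrank : r - 1 ≤ Module.finrank ℂ
      (LinearMap.range ((Matrix.toLinearMap₂' ℂ ω).compl₁₂ f f)))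
    (φ : GL (Fin r) ℂ) (hφ : φ ∈ GOmatConn r ω)
    (hfix : ∀ v : V, (φ : Matrix (Fin r) (Fin r) ℂ) *ᵥ (f v) = f v) :
    φ = 1 :=
  GOconn_acts_freely_on_corank_le_one_locus_general r hr hr2 ω hsymm hnd V f hrank φ hφ hfix
end
end

section
/- Assume r ≥ 4. Let V be a finite-dimensional complex vector space and let f : V → S be a linear map whose pullback form f*ω_S has rank r − 2 and whose image f(V) has dimension r − 1. Then the only φ ∈ GO(S)° with φ ∘ f = f is the identity; i.e., the stabilizer of f in GO(S)° is trivial. -/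
/-!
Since `ω` does not vanish on `W = f(V)` and `φ` fixes `W` pointwise, the multiplier of `φ` is `1`,
so `φ` is an isometry, and then `ω(φx - x, w) = ω(φx, φw) - ω(x, w) = 0` for `w ∈ W`: every
`φx - x` lies in `W^⊥`. The rank hypotheses say that the radical `W ∩ W^⊥` of `ω|_W` is a line,
while `W^⊥` is a line because `W` is a hyperplane; hence `W^⊥ ⊆ W`. For `x₀ ∉ W` the vector
`e = φx₀ - x₀` then lies in `W ∩ W^⊥`, and expanding `ω(x₀, x₀) = ω(x₀ + e, x₀ + e)` gives
`2ω(x₀, e) = 0`. So `e` is orthogonal to `W + ℂx₀`, which is everything, and `e = 0`: `φ` fixes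
both `W` and `x₀`.
-/

open Matrix

noncomputable section

variable {r : ℕ}

open Module LinearMap Submodule

section

variable {K E V : Type*} [Field K] [AddCommGroup E] [Module K E] [AddCommGroup V] [Module K V]

theorem Submodule.eq_top_of_finrank_quotient_eq_one [FiniteDimensional K E] {W N : Submodule K E}
    (hW : finrank K (E ⧸ W) = 1) (hWN : W ≤ N) {x : E} (hxW : x ∉ W) (hxN : x ∈ N) : N = ⊤ :=
  top_le_iff.1 <| (sup_span_singleton_eq_top_iff hxW).2 hW ▸
    sup_le hWN (span_singleton_le_iff_mem x N |>.2 hxN)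

theorem LinearMap.eq_one_of_compl₁₂_eq_smul {B : E →ₗ[K] E →ₗ[K] K} {φ : E →ₗ[K] E} {c : K}
    (hφ : B.compl₁₂ φ φ = c • B) {f : V →ₗ[K] E} (hfix : ∀ v, φ (f v) = f v)
    (hf : B.compl₁₂ f f ≠ 0) : c = 1 := by
  obtain ⟨v, w, hvw⟩ : ∃ v w, B (f v) (f w) ≠ 0 := by
    by_contra! h
    exact hf (LinearMap.ext₂ h)
  have h := LinearMap.congr_fun₂ hφ (f v) (f w)
  simp only [compl₁₂_apply, hfix, smul_apply, smul_eq_mul] at h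
  exact (mul_eq_right₀ hvw).1 h.symm

namespace LinearMap.BilinForm

variable {B : LinearMap.BilinForm K E}

theorem ker_compl₁₂_eq_comap_orthogonal_range (hB : B.IsRefl) (f : V →ₗ[K] E) :
    ker (B.compl₁₂ f f) = (B.orthogonal (range f)).comap f := by
  ext v
  simp only [mem_ker, mem_comap, mem_orthogonal_iff, mem_range, forall_exists_index,
    forall_apply_eq_imp_iff]
  exact ⟨fun h w => hB _ _ (LinearMap.congr_fun h w), fun h => LinearMap.ext fun w => hB _ _ (h w)⟩

theorem finrank_inf_orthogonal_range_add_finrank_range_compl₁₂ [FiniteDimensional K V]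
    (hB : B.IsRefl) (f : V →ₗ[K] E) :
    finrank K ↥(range f ⊓ B.orthogonal (range f)) + finrank K (range (B.compl₁₂ f f)) =
      finrank K (range f) := by
  have hker : ker f ≤ (B.orthogonal (range f)).comap f := fun v hv => by simp [mem_ker.1 hv]
  have h₁ := finrank_range_add_finrank_ker (B.compl₁₂ f f)
  have h₂ := finrank_range_add_finrank_ker f
  have h₃ := finrank_range_add_finrank_ker (f.domRestrict ((B.orthogonal (range f)).comap f))
  rw [range_domRestrict, map_comap_eq, ker_domRestrict,
    (comapSubtypeEquivOfLe hker).finrank_eq] at h₃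
  rw [ker_compl₁₂_eq_comap_orthogonal_range hB] at h₁
  omega

variable [FiniteDimensional K E]

theorem orthogonal_le_of_finrank_le_finrank_inf_orthogonal (hB : B.Nondegenerate)
    {W : Submodule K E} (h : finrank K E - finrank K W ≤ finrank K ↥(W ⊓ B.orthogonal W)) :
    B.orthogonal W ≤ W := by
  have hinf : W ⊓ B.orthogonal W = B.orthogonal W :=
    eq_of_le_of_finrank_le inf_le_right (finrank_orthogonal hB W ▸ h)
  exact hinf ▸ inf_le_left

theorem eq_id_of_compl₁₂_eq_self_of_fixes_hyperplane [NeZero (2 : K)] (hB : B.Nondegenerate)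
    (hBs : B.IsSymm) {W : Submodule K E} (hW : finrank K (E ⧸ W) = 1)
    (hWperp : B.orthogonal W ≤ W) {φ : E →ₗ[K] E} (hφ : B.compl₁₂ φ φ = B)
    (hfix : ∀ w ∈ W, φ w = w) : φ = LinearMap.id := by
  have hiso (x y : E) : B (φ x) (φ y) = B x y := LinearMap.congr_fun₂ hφ x y
  obtain ⟨x₀, hx₀⟩ : ∃ x, x ∉ W := by
    by_contra! h
    rw [eq_top_iff'.2 h, finrank_zero_of_subsingleton] at hW
    exact zero_ne_one hW
  have hperp (x : E) : φ x - x ∈ B.orthogonal W := fun w hw => by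
    rw [map_sub, ← hiso w x, hfix w hw, sub_self]
  set e := φ x₀ - x₀ with he
  have heW : e ∈ W := hWperp (hperp x₀)
  have hee : B e e = 0 := hperp x₀ e heW
  have hx₀e : B x₀ e = 0 := by
    have h := hiso x₀ x₀
    rw [show φ x₀ = x₀ + e by rw [he]; abel] at h
    simp only [map_add, LinearMap.add_apply, hee, hBs.eq e x₀] at h
    exact (mul_eq_zero.1 (by linear_combination h : (2 : K) * B x₀ e = 0)).resolve_left
      two_ne_zero
  have he0 : e = 0 := by
    refine hB.2 e fun y => ?_
    have htop : ker (B.flip e) = ⊤ :=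
      eq_top_of_finrank_quotient_eq_one hW (fun w hw => hperp x₀ w hw) hx₀ hx₀e
    exact mem_ker.1 (eq_top_iff'.1 htop y)
  have htop : eqLocus φ LinearMap.id = ⊤ :=
    eq_top_of_finrank_quotient_eq_one hW hfix hx₀ (sub_eq_zero.1 he0)
  exact LinearMap.ext fun x => eq_top_iff'.1 htop x

end LinearMap.BilinForm

end

open LinearMap.BilinForm

theorem GOmatConn_le_GOmat {ω : Matrix (Fin r) (Fin r) ℂ} : GOmatConn r ω ≤ GOmat r ω :=
  Subgroup.map_subtype_le _

theorem compl₁₂_toLin'_eq_smul_of_mem_GOmat {ω : Matrix (Fin r) (Fin r) ℂ} {φ : GL (Fin r) ℂ}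
    (hφ : φ ∈ GOmat r ω) :
    ∃ c : ℂ, (toLinearMap₂' ℂ ω).compl₁₂ (toLin' φ.val) (toLin' φ.val) =
        c • toLinearMap₂' ℂ ω := by
  obtain ⟨c, hc⟩ := hφ
  exact ⟨c, by rw [toLinearMap₂'_comp, hc, map_smul]⟩

theorem stabilizer_trivial_nonclosed_orbit_case_general
    (r : ℕ) (hr4 : 4 ≤ r)
    (ω : Matrix (Fin r) (Fin r) ℂ) (hsymm : ω.IsSymm) (hnd : IsUnit ω.det)
    (V : Type) [AddCommGroup V] [Module ℂ V] [FiniteDimensional ℂ V]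
    (f : V →ₗ[ℂ] (Fin r → ℂ))
    (hrank : Module.finrank ℂ
      (LinearMap.range ((Matrix.toLinearMap₂' ℂ ω).compl₁₂ f f)) = r - 2)
    (him : Module.finrank ℂ (LinearMap.range f) = r - 1)
    (φ : GL (Fin r) ℂ) (hφ : φ ∈ GOmatConn r ω)
    (hfix : ∀ v : V, (φ : Matrix (Fin r) (Fin r) ℂ) *ᵥ (f v) = f v) :
    φ = 1 := by
  set B : LinearMap.BilinForm ℂ (Fin r → ℂ) := toLinearMap₂' ℂ ω
  have hB : B.Nondegenerate := nondegenerate_toLinearMap₂'_of_det_ne_zero' hnd.ne_zero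
  have hBs : B.IsSymm := isSymm_toBilin'_iff_isSymm.2 hsymm
  have hE : finrank ℂ (Fin r → ℂ) = r := finrank_fin_fun ℂ
  have hW : finrank ℂ ((Fin r → ℂ) ⧸ range f) = 1 := by
    have := (range f).finrank_quotient_add_finrank
    omega
  have hradical := finrank_inf_orthogonal_range_add_finrank_range_compl₁₂ hBs.isRefl f
  have hWperp : B.orthogonal (range f) ≤ range f :=
    orthogonal_le_of_finrank_le_finrank_inf_orthogonal hB (by omega)
  obtain ⟨c, hc⟩ := compl₁₂_toLin'_eq_smul_of_mem_GOmat (GOmatConn_le_GOmat hφ)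
  have hc1 : c = 1 := eq_one_of_compl₁₂_eq_smul hc hfix fun h0 => by
    rw [h0, range_zero, finrank_bot] at hrank
    omega
  rw [hc1, one_smul] at hc
  have hid := eq_id_of_compl₁₂_eq_self_of_fixes_hyperplane hB hBs hW hWperp hc
    (by rintro _ ⟨v, rfl⟩; exact hfix v)
  exact Units.ext (toLin'.injective (hid.trans toLin'_one.symm))

/-- Assume `r ≥ 4` (`r` even), and let `ω` be a nondegenerate symmetric
`r × r` matrix viewed as a bilinear form on `S = ℂʳ`.  If `f : V → S` is a linear map
whose pullback form has rank `r - 2` and whose image has dimension `r - 1`, then the only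
`φ ∈ GO(ω)°` with `φ ∘ f = f` is the identity. -/
theorem stabilizer_trivial_nonclosed_orbit_case
    (r : ℕ) (hr : Even r) (hr4 : 4 ≤ r)
    (ω : Matrix (Fin r) (Fin r) ℂ) (hsymm : ω.IsSymm) (hnd : IsUnit ω.det)
    (V : Type) [AddCommGroup V] [Module ℂ V] [FiniteDimensional ℂ V]
    (f : V →ₗ[ℂ] (Fin r → ℂ))
    (hrank : Module.finrank ℂ
      (LinearMap.range ((Matrix.toLinearMap₂' ℂ ω).compl₁₂ f f)) = r - 2)
    (him : Module.finrank ℂ (LinearMap.range f) = r - 1)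
    (φ : GL (Fin r) ℂ) (hφ : φ ∈ GOmatConn r ω)
    (hfix : ∀ v : V, (φ : Matrix (Fin r) (Fin r) ℂ) *ᵥ (f v) = f v) :
    φ = 1 :=
  stabilizer_trivial_nonclosed_orbit_case_general r hr4 ω hsymm hnd V f hrank him φ hφ hfix
end
end
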